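/- arXiv:1610.09320 — 3 statements merged into one kernel-verified Lean document; each statement's English description precedes it below -/
import Mathlib

section
/- Let (G,s,t) be an st-connected net and C a simple cycle of G having exactly one entry node or exactly one exit node. Then C contains at least one redundant edge. -/
/-- A directed multigraph: a type of vertices, a type of edges,
and source/target maps. -/
structure MultiDigraph (V E : Type) where
  src : E → V
  tgt : E → V

namespace MultiDigraph

variable {V E : Type}

/-- `G.IsWalk u p v` : the list of edges `p` forms a walk from `u` to `v`. -/
def IsWalk (G : MultiDigraph V E) : V → List E → V → Prop
  | u, [], v => u = v
  | u, e :: p, v => G.src e = u ∧ IsWalk G (G.tgt e) p v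

/-- The list of vertices visited by a walk starting at `u` with edges `p`. -/
def walkVerts (G : MultiDigraph V E) : V → List E → List V
  | u, [] => [u]
  | u, e :: p => u :: walkVerts G (G.tgt e) p

/-- A simple path: a walk repeating no vertex. -/
def IsSimplePath (G : MultiDigraph V E) (u : V) (p : List E) (v : V) : Prop :=
  G.IsWalk u p v ∧ (G.walkVerts u p).Nodup

/-- The set of simple `st`-paths using only edges from `F`. -/
def SP (G : MultiDigraph V E) (F : Set E) (s t : V) : Set (List E) :=
  {p | G.IsSimplePath s p t ∧ ∀ e ∈ p, e ∈ F}

/-- An edge is irredundant if it lies on some simple `st`-path. -/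
def EdgeIrredundant (G : MultiDigraph V E) (s t : V) (e : E) : Prop :=
  ∃ p, G.IsSimplePath s p t ∧ e ∈ p

/-- A vertex is irredundant if it lies on some simple `st`-path. -/
def VertexIrredundant (G : MultiDigraph V E) (s t : V) (x : V) : Prop :=
  ∃ p, G.IsSimplePath s p t ∧ x ∈ G.walkVerts s p

/-- A net is `st`-connected if every vertex lies on some `st`-path. -/
def STConnected (G : MultiDigraph V E) (s t : V) : Prop :=
  ∀ x : V, ∃ p, G.IsWalk s p t ∧ x ∈ G.walkVerts s p

end MultiDigraph

namespace MultiDigraph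

variable {V E : Type}

/-- A simple cycle based at `v` with edge list `p`: a nonempty closed walk
whose vertices (except the repeated endpoint) are all distinct. -/
def IsSimpleCycle (G : MultiDigraph V E) (v : V) (p : List E) : Prop :=
  G.IsWalk v p v ∧ p ≠ [] ∧ ((G.walkVerts v p).dropLast).Nodup

/-- The list of (distinct) vertices of a cycle. -/
def cycleVerts (G : MultiDigraph V E) (v : V) (p : List E) : List V :=
  (G.walkVerts v p).dropLast

/-- The set of vertices of a cycle. -/
def cycleSet (G : MultiDigraph V E) (v : V) (p : List E) : Set V :=
  {x | x ∈ G.cycleVerts v p}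

/-- `u` is an entry node of the vertex set `C`: `u ∈ C` and some simple path
from `s` to `u` meets `C` only in `u`. -/
def EntryNode (G : MultiDigraph V E) (s : V) (C : Set V) (u : V) : Prop :=
  u ∈ C ∧ ∃ q, G.IsSimplePath s q u ∧ ∀ x ∈ G.walkVerts s q, x ∈ C → x = u

/-- `u` is an exit node of the vertex set `C`: `u ∈ C` and some simple path
from `u` to `t` meets `C` only in `u`. -/
def ExitNode (G : MultiDigraph V E) (t : V) (C : Set V) (u : V) : Prop :=
  u ∈ C ∧ ∃ q, G.IsSimplePath u q t ∧ ∀ x ∈ G.walkVerts u q, x ∈ C → x = u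

/-- `q` is an entry path into `C` ending at `u`. -/
def IsEntryPath (G : MultiDigraph V E) (s : V) (C : Set V) (q : List E) (u : V) : Prop :=
  u ∈ C ∧ G.IsSimplePath s q u ∧ ∀ x ∈ G.walkVerts s q, x ∈ C → x = u

/-- `q` is an exit path from `C` starting at `u`. -/
def IsExitPath (G : MultiDigraph V E) (t : V) (C : Set V) (q : List E) (u : V) : Prop :=
  u ∈ C ∧ G.IsSimplePath u q t ∧ ∀ x ∈ G.walkVerts u q, x ∈ C → x = u

/-- Length of a shortest directed walk from `u` to `v`. -/
noncomputable def dist (G : MultiDigraph V E) (u v : V) : ℕ :=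
  sInf {n | ∃ p, G.IsWalk u p v ∧ p.length = n}

/-- `d_s(C)`: the minimum over `u ∈ C` of `dist s u`. -/
noncomputable def dS (G : MultiDigraph V E) (s : V) (C : Set V) : ℕ :=
  sInf {n | ∃ u ∈ C, G.dist s u = n}

/-- `d_t(C)`: the minimum over `u ∈ C` of `dist u t`. -/
noncomputable def dT (G : MultiDigraph V E) (t : V) (C : Set V) : ℕ :=
  sInf {n | ∃ u ∈ C, G.dist u t = n}

/-- An `s`-minimal cycle: a simple cycle whose distance from `s` is minimal
among all simple cycles of `G`. -/
def SMinimal (G : MultiDigraph V E) (s v : V) (p : List E) : Prop :=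
  G.IsSimpleCycle v p ∧
    ∀ v' p', G.IsSimpleCycle v' p' →
      G.dS s (G.cycleSet v p) ≤ G.dS s (G.cycleSet v' p')

end MultiDigraph

/-!
Let `u₀` be the unique entry node of the cycle `C` and `e` the cycle edge entering `u₀`.
A simple `st`-path through `e` reaches `src e ∈ C` before `u₀ = tgt e`, and the first vertex
of `C` along it is an entry node, hence equal to `u₀`: so the path visits `u₀` twice.
Dually, if `u₀` is the unique exit node, the cycle edge leaving `u₀` is redundant, since the
last vertex of `C` on a simple `st`-path is an exit node.
-/

namespace MultiDigraph

variable {V E : Type} {G : MultiDigraph V E}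

section Walks

variable (G) in
lemma walkVerts_eq_cons_map_tgt (u : V) (p : List E) :
    G.walkVerts u p = u :: p.map G.tgt := by
  induction p generalizing u with
  | nil => rfl
  | cons e p ih => simp only [walkVerts, ih, List.map_cons]

lemma IsWalk.walkVerts_eq_map_src_append {u w : V} {p : List E} (hw : G.IsWalk u p w) :
    G.walkVerts u p = p.map G.src ++ [w] := by
  induction p generalizing u with
  | nil => rw [show u = w from hw]; rfl
  | cons e p ih =>
    obtain ⟨hsrc, hw⟩ := hw
    simp only [walkVerts, ih hw, List.map_cons, List.cons_append, hsrc]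

lemma IsWalk.end_mem_walkVerts {u w : V} {p : List E} (hw : G.IsWalk u p w) :
    w ∈ G.walkVerts u p := by
  simp [hw.walkVerts_eq_map_src_append]

variable (G) in
lemma walkVerts_append_cons (u : V) (p : List E) (e : E) (q : List E) :
    G.walkVerts u (p ++ e :: q) = G.walkVerts u p ++ G.walkVerts (G.tgt e) q := by
  induction p generalizing u with
  | nil => rfl
  | cons f p ih => simp only [List.cons_append, walkVerts, ih]

lemma isWalk_append_cons {u w : V} {p : List E} {e : E} {q : List E} :
    G.IsWalk u (p ++ e :: q) w ↔ G.IsWalk u p (G.src e) ∧ G.IsWalk (G.tgt e) q w := by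
  induction p generalizing u with
  | nil => simp only [List.nil_append, IsWalk, eq_comm]
  | cons f p ih => simp only [List.cons_append, IsWalk, ih, and_assoc]

end Walks

section Cycles

lemma IsWalk.cycleVerts_eq_map_src {u w : V} {p : List E} (hw : G.IsWalk u p w) :
    G.cycleVerts u p = p.map G.src := by
  rw [cycleVerts, hw.walkVerts_eq_map_src_append, List.dropLast_concat]

lemma IsWalk.mem_map_src_iff_mem_map_tgt {v x : V} {p : List E} (hw : G.IsWalk v p v)
    (hp : p ≠ []) : x ∈ p.map G.src ↔ x ∈ p.map G.tgt := by
  have hverts : v :: p.map G.tgt = p.map G.src ++ [v] := by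
    rw [← walkVerts_eq_cons_map_tgt, hw.walkVerts_eq_map_src_append]
  have hsrc : v ∈ p.map G.src := by
    obtain ⟨e, p, rfl⟩ := List.exists_cons_of_ne_nil hp
    simp [← hw.1]
  have htgt : v ∈ p.map G.tgt := by
    have := congrArg List.tail hverts
    rw [List.tail_cons, List.tail_append_of_ne_nil (by simpa using hp)] at this
    simp [this]
  constructor
  · intro hx
    have : x ∈ v :: p.map G.tgt := hverts ▸ List.mem_append_left _ hx
    rcases List.mem_cons.mp this with rfl | hx
    exacts [htgt, hx]
  · intro hx
    have : x ∈ p.map G.src ++ [v] := hverts ▸ List.mem_cons_of_mem _ hx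
    rcases List.mem_append.mp this with hx | hx
    exacts [hx, (List.mem_singleton.mp hx) ▸ hsrc]

lemma IsWalk.exists_edge_into_of_mem_cycleSet {v u : V} {p : List E} (hw : G.IsWalk v p v)
    (hp : p ≠ []) (hu : u ∈ G.cycleSet v p) :
    ∃ e ∈ p, G.src e ∈ G.cycleSet v p ∧ G.tgt e = u := by
  have hu : u ∈ p.map G.src := hw.cycleVerts_eq_map_src ▸ hu
  obtain ⟨e, he, rfl⟩ := List.mem_map.mp ((hw.mem_map_src_iff_mem_map_tgt hp).mp hu)
  refine ⟨e, he, ?_, rfl⟩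
  change _ ∈ G.cycleVerts v p
  exact hw.cycleVerts_eq_map_src ▸ List.mem_map_of_mem he

lemma IsWalk.exists_edge_out_of_mem_cycleSet {v u : V} {p : List E} (hw : G.IsWalk v p v)
    (hp : p ≠ []) (hu : u ∈ G.cycleSet v p) :
    ∃ e ∈ p, G.src e = u ∧ G.tgt e ∈ G.cycleSet v p := by
  have hu : u ∈ p.map G.src := hw.cycleVerts_eq_map_src ▸ hu
  obtain ⟨e, he, rfl⟩ := List.mem_map.mp hu
  refine ⟨e, he, rfl, ?_⟩
  change _ ∈ G.cycleVerts v p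
  exact hw.cycleVerts_eq_map_src ▸ (hw.mem_map_src_iff_mem_map_tgt hp).mpr
    (List.mem_map_of_mem he)

end Cycles

section EntryExit

variable {C : Set V}

-- The inclusion of vertices is what keeps the extended entry path `f :: q'` simple in the induction.
lemma IsWalk.exists_entryPath {a b : V} {q : List E} (hw : G.IsWalk a q b)
    (hnd : (G.walkVerts a q).Nodup) (hC : ∃ y ∈ G.walkVerts a q, y ∈ C) :
    ∃ u ∈ G.walkVerts a q, ∃ q', G.IsEntryPath a C q' u ∧
      G.walkVerts a q' ⊆ G.walkVerts a q := by
  induction q generalizing a with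
  | nil =>
    obtain ⟨y, hy, hyC⟩ := hC
    obtain rfl : y = a := List.mem_singleton.mp hy
    exact ⟨y, hy, [], ⟨hyC, ⟨rfl, List.nodup_singleton y⟩, by simp [walkVerts]⟩, List.Subset.refl _⟩
  | cons f q ih =>
    obtain ⟨hsrc, hw⟩ := hw
    rw [walkVerts, List.nodup_cons] at hnd
    by_cases ha : a ∈ C
    · exact ⟨a, List.mem_cons_self, [], ⟨ha, ⟨rfl, List.nodup_singleton a⟩, by simp [walkVerts]⟩,
        by simp [walkVerts]⟩
    obtain ⟨y, hy, hyC⟩ := hC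
    have hy : y ∈ G.walkVerts (G.tgt f) q := by
      rcases List.mem_cons.mp hy with rfl | hy
      exacts [absurd hyC ha, hy]
    obtain ⟨u, hu, q', ⟨huC, ⟨hw', hnd'⟩, honly⟩, hsub⟩ := ih hw hnd.2 ⟨y, hy, hyC⟩
    refine ⟨u, List.mem_cons_of_mem _ hu, f :: q', ⟨huC, ⟨⟨hsrc, hw'⟩, ?_⟩, ?_⟩,
      List.cons_subset_cons _ hsub⟩
    · exact List.nodup_cons.mpr ⟨fun h => hnd.1 (hsub h), hnd'⟩
    · intro x hx hxC
      rcases List.mem_cons.mp hx with rfl | hx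
      exacts [absurd hxC ha, honly x hx hxC]

lemma IsWalk.exists_exitNode {a t : V} {q : List E} (hw : G.IsWalk a q t)
    (hnd : (G.walkVerts a q).Nodup) (hC : ∃ y ∈ G.walkVerts a q, y ∈ C) :
    ∃ u ∈ G.walkVerts a q, G.ExitNode t C u := by
  induction q generalizing a with
  | nil =>
    obtain ⟨y, hy, hyC⟩ := hC
    obtain rfl : y = a := List.mem_singleton.mp hy
    exact ⟨y, hy, hyC, [], ⟨hw, hnd⟩, by simp [walkVerts]⟩
  | cons f q ih =>
    by_cases hlater : ∃ y ∈ G.walkVerts (G.tgt f) q, y ∈ C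
    · obtain ⟨u, hu, hexit⟩ := ih hw.2 (List.nodup_cons.mp hnd).2 hlater
      exact ⟨u, List.mem_cons_of_mem _ hu, hexit⟩
    push Not at hlater
    obtain ⟨y, hy, hyC⟩ := hC
    obtain rfl : y = a := by
      rcases List.mem_cons.mp hy with rfl | hy
      exacts [rfl, absurd hyC (hlater y hy)]
    refine ⟨y, List.mem_cons_self, hyC, f :: q, ⟨hw, hnd⟩, fun x hx hxC => ?_⟩
    rcases List.mem_cons.mp hx with rfl | hx
    exacts [rfl, absurd hxC (hlater x hx)]

lemma not_edgeIrredundant_of_forall_entryNode_eq {s t u₀ : V} {e : E}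
    (huniq : ∀ u, G.EntryNode s C u → u = u₀) (hsrc : G.src e ∈ C) (htgt : G.tgt e = u₀) :
    ¬ G.EdgeIrredundant s t e := by
  rintro ⟨P, ⟨hw, hnd⟩, he⟩
  obtain ⟨P₁, P₂, rfl⟩ := List.append_of_mem he
  rw [isWalk_append_cons] at hw
  rw [walkVerts_append_cons] at hnd
  obtain ⟨u, hu, q, hentry, -⟩ :=
    hw.1.exists_entryPath (List.nodup_append.mp hnd).1 ⟨_, hw.1.end_mem_walkVerts, hsrc⟩
  have hu₀ : u = u₀ := huniq u ⟨hentry.1, q, hentry.2⟩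
  subst hu₀ htgt
  exact (List.nodup_append.mp hnd).2.2 _ hu _ (by simp [walkVerts_eq_cons_map_tgt]) rfl

lemma not_edgeIrredundant_of_forall_exitNode_eq {s t u₀ : V} {e : E}
    (huniq : ∀ u, G.ExitNode t C u → u = u₀) (hsrc : G.src e = u₀) (htgt : G.tgt e ∈ C) :
    ¬ G.EdgeIrredundant s t e := by
  rintro ⟨P, ⟨hw, hnd⟩, he⟩
  obtain ⟨P₁, P₂, rfl⟩ := List.append_of_mem he
  rw [isWalk_append_cons] at hw
  rw [walkVerts_append_cons] at hnd
  obtain ⟨u, hu, hexit⟩ := hw.2.exists_exitNode (List.nodup_append.mp hnd).2.1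
    ⟨_, by simp [walkVerts_eq_cons_map_tgt], htgt⟩
  have hu₀ : u = u₀ := huniq u hexit
  subst hu₀ hsrc
  exact (List.nodup_append.mp hnd).2.2 _ hw.1.end_mem_walkVerts _ hu rfl

end EntryExit

end MultiDigraph

open MultiDigraph in
theorem stmt6_general {V E : Type} (G : MultiDigraph V E) (s t : V)
    (v : V) (p : List E)
    (hC : G.IsSimpleCycle v p)
    (h : (∃! u, G.EntryNode s (G.cycleSet v p) u) ∨
         (∃! u, G.ExitNode t (G.cycleSet v p) u)) :
    ∃ e ∈ p, ¬ G.EdgeIrredundant s t e := by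
  obtain ⟨hw, hp, -⟩ := hC
  rcases h with ⟨u₀, hu₀, huniq⟩ | ⟨u₀, hu₀, huniq⟩
  · obtain ⟨e, he, hsrc, htgt⟩ := hw.exists_edge_into_of_mem_cycleSet hp hu₀.1
    exact ⟨e, he, not_edgeIrredundant_of_forall_entryNode_eq huniq hsrc htgt⟩
  · obtain ⟨e, he, hsrc, htgt⟩ := hw.exists_edge_out_of_mem_cycleSet hp hu₀.1
    exact ⟨e, he, not_edgeIrredundant_of_forall_exitNode_eq huniq hsrc htgt⟩

open MultiDigraph in
/-- In an `st`-connected net, a simple cycle with exactly one entry node or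
exactly one exit node contains a redundant edge. -/
theorem stmt6 {V E : Type} (G : MultiDigraph V E) (s t : V)
    (hconn : G.STConnected s t) (v : V) (p : List E)
    (hC : G.IsSimpleCycle v p)
    (h : (∃! u, G.EntryNode s (G.cycleSet v p) u) ∨
         (∃! u, G.ExitNode t (G.cycleSet v p) u)) :
    ∃ e ∈ p, ¬ G.EdgeIrredundant s t e :=
  stmt6_general G s t v p hC h
end

section
/- Let C be a splittable simple cycle in an st-connected net and let h be a neutral hyper-chord from the entry region E to the exit region X of C. Then no internal vertex of h lies on any entry path or exit path of C. -/
namespace MultiDigraph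

variable {V E : Type} [DecidableEq V]

/-- The cycle `(v, p)`, as written, is splittable: every entry node occurs
no later than every exit node in the vertex list of the cycle. -/
def SplittableAt (G : MultiDigraph V E) (s t v : V) (p : List E) : Prop :=
  G.IsSimpleCycle v p ∧
    ∀ u w, G.EntryNode s (G.cycleSet v p) u → G.ExitNode t (G.cycleSet v p) w →
      (G.cycleVerts v p).idxOf u ≤ (G.cycleVerts v p).idxOf w

/-- A cycle is splittable if some cyclic rewriting of it is splittable. -/
def Splittable (G : MultiDigraph V E) (s t v : V) (p : List E) : Prop :=
  G.IsSimpleCycle v p ∧ ∃ (n : ℕ) (v' : V), G.SplittableAt s t v' (p.rotate n)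

/-- The entry region of a splittable cycle written starting at the first entry
node: vertices strictly before the first exit node `ξ1`. -/
def Ereg (G : MultiDigraph V E) (v : V) (p : List E) (ξ1 : V) : Set V :=
  {x | x ∈ G.cycleVerts v p ∧
    (G.cycleVerts v p).idxOf x < (G.cycleVerts v p).idxOf ξ1}

/-- The exit region: from the first exit node `ξ1` (excluded iff `ξ1` is the
last entry node `lastE`) up to the last exit node `lastX`. -/
def Xreg (G : MultiDigraph V E) (v : V) (p : List E) (ξ1 lastE lastX : V) : Set V :=
  {x | x ∈ G.cycleVerts v p ∧
    (if ξ1 = lastE then (G.cycleVerts v p).idxOf ξ1 < (G.cycleVerts v p).idxOf x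
      else (G.cycleVerts v p).idxOf ξ1 ≤ (G.cycleVerts v p).idxOf x) ∧
    (G.cycleVerts v p).idxOf x ≤ (G.cycleVerts v p).idxOf lastX}

/-- The neutral region: vertices strictly after the last exit node `lastX`. -/
def Nreg (G : MultiDigraph V E) (v : V) (p : List E) (lastX : V) : Set V :=
  {x | x ∈ G.cycleVerts v p ∧
    (G.cycleVerts v p).idxOf lastX < (G.cycleVerts v p).idxOf x}

/-- Data of a splittable cycle written starting at its first entry node `v`,
with first exit node `ξ1`, last entry node `lastE` and last exit node `lastX`. -/
structure SplitData (G : MultiDigraph V E) (s t v : V) (p : List E)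
    (ξ1 lastE lastX : V) : Prop where
  splitAt : G.SplittableAt s t v p
  base_entry : G.EntryNode s (G.cycleSet v p) v
  firstExit : G.ExitNode t (G.cycleSet v p) ξ1 ∧
    ∀ w, G.ExitNode t (G.cycleSet v p) w →
      (G.cycleVerts v p).idxOf ξ1 ≤ (G.cycleVerts v p).idxOf w
  lastEntry : G.EntryNode s (G.cycleSet v p) lastE ∧
    ∀ u, G.EntryNode s (G.cycleSet v p) u →
      (G.cycleVerts v p).idxOf u ≤ (G.cycleVerts v p).idxOf lastE
  lastExit : G.ExitNode t (G.cycleSet v p) lastX ∧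
    ∀ w, G.ExitNode t (G.cycleSet v p) w →
      (G.cycleVerts v p).idxOf w ≤ (G.cycleVerts v p).idxOf lastX

/-- A hyper-chord for the cycle `(v,p)` from `x` to `y`: a simple path between
two cycle vertices using at least one edge not on the cycle. -/
def HyperChord (G : MultiDigraph V E) (v : V) (p : List E) (x y : V)
    (h : List E) : Prop :=
  x ∈ G.cycleSet v p ∧ y ∈ G.cycleSet v p ∧ G.IsSimplePath x h y ∧ ∃ e ∈ h, e ∉ p

/-- A neutral hyper-chord: all of its vertices lying on the cycle, other than
its extremes, belong to the neutral region `Nr`. -/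
def NeutralHyperChord (G : MultiDigraph V E) (v : V) (p : List E) (x y : V)
    (h : List E) (Nr : Set V) : Prop :=
  G.HyperChord v p x y h ∧
    ∀ z ∈ G.walkVerts x h, z ∈ G.cycleSet v p → z = x ∨ z = y ∨ z ∈ Nr

/-- `f` is the target in the neutral region of a neutral hyper-chord from the
entry region. -/
def TargetFromE (G : MultiDigraph V E) (v : V) (p : List E) (ξ1 lastX f : V) : Prop :=
  ∃ x ∈ G.Ereg v p ξ1, ∃ h, G.NeutralHyperChord v p x f h (G.Nreg v p lastX)

/-- `ℓ` is the source in the neutral region of a neutral hyper-chord to the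
exit region. -/
def SourceToX (G : MultiDigraph V E) (v : V) (p : List E)
    (ξ1 lastE lastX ℓ : V) : Prop :=
  ∃ y ∈ G.Xreg v p ξ1 lastE lastX, ∃ h,
    G.NeutralHyperChord v p ℓ y h (G.Nreg v p lastX)

/-- The path `(u, q)` touches the splitter of the splittable cycle `(v,p)`:
the splitter is the vertex `ξ1` if `ξ1 = lastE`, and otherwise the edge of the
cycle entering `ξ1`. -/
def TouchesSplitter (G : MultiDigraph V E) (p : List E) (ξ1 lastE u : V)
    (q : List E) : Prop :=
  (ξ1 = lastE ∧ ξ1 ∈ G.walkVerts u q) ∨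
  (ξ1 ≠ lastE ∧ ∃ e ∈ q, e ∈ p ∧ G.tgt e = ξ1)

end MultiDigraph

/-!
The first vertex on the cycle `C` of any walk from `s` that reaches `C` is an entry node, and the
last vertex on `C` of any walk to `t` that starts on `C` is an exit node (shortcut the relevant
part of the walk to a simple path). Suppose an internal vertex `z` of the hyper-chord `x ⇝ y` lay
on an entry path. Following the entry path up to `z` and then the hyper-chord to `y` produces an
entry node which is either `z` itself or a vertex of the hyper-chord after `z`; by neutrality it
is `y` or lies in the neutral region. Both are impossible, because splittability places every
entry node weakly before the first exit node `ξ1`. Exit paths are handled dually, walking from `x`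
along the hyper-chord to `z` and then along the exit path, using that exit nodes lie between `ξ1`
and the last exit node.
-/

namespace MultiDigraph

variable {V E : Type} {G : MultiDigraph V E} {C : Set V} {a s t u v x y z : V}
  {p p₁ p₂ h q : List E}

lemma walkVerts_ne_nil (G : MultiDigraph V E) (u : V) (p : List E) : G.walkVerts u p ≠ [] := by
  cases p <;> simp [walkVerts]

lemma start_mem_walkVerts (G : MultiDigraph V E) (u : V) (p : List E) :
    u ∈ G.walkVerts u p := by
  cases p <;> simp [walkVerts]

lemma IsWalk.end_mem_walkVerts_s8 (hp : G.IsWalk u p v) : v ∈ G.walkVerts u p := by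
  induction p generalizing u with
  | nil => exact hp ▸ G.start_mem_walkVerts u []
  | cons e p ih => exact List.mem_cons_of_mem _ (ih hp.2)

lemma IsWalk.append (h₁ : G.IsWalk u p₁ z) (h₂ : G.IsWalk z p₂ v) :
    G.IsWalk u (p₁ ++ p₂) v := by
  induction p₁ generalizing u with
  | nil => exact h₁ ▸ h₂
  | cons e p ih => exact ⟨h₁.1, ih h₁.2⟩

lemma IsWalk.walkVerts_append (h₁ : G.IsWalk u p₁ z) (p₂ : List E) :
    G.walkVerts u (p₁ ++ p₂) = (G.walkVerts u p₁).dropLast ++ G.walkVerts z p₂ := by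
  induction p₁ generalizing u with
  | nil => cases h₁; simp [walkVerts]
  | cons e p ih =>
    change u :: G.walkVerts (G.tgt e) (p ++ p₂) = (u :: G.walkVerts (G.tgt e) p).dropLast ++ _
    rw [ih h₁.2, List.dropLast_cons_of_ne_nil (G.walkVerts_ne_nil _ _), List.cons_append]

lemma IsWalk.walkVerts_eq_dropLast_append (hp : G.IsWalk u p v) :
    G.walkVerts u p = (G.walkVerts u p).dropLast ++ [v] := by
  simpa [walkVerts] using hp.walkVerts_append []

lemma IsWalk.mem_walkVerts_append (h₁ : G.IsWalk u p₁ z)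
    (ha : a ∈ G.walkVerts u (p₁ ++ p₂)) : a ∈ G.walkVerts u p₁ ∨ a ∈ G.walkVerts z p₂ := by
  rw [h₁.walkVerts_append] at ha
  exact (List.mem_append.1 ha).imp_left fun h => List.dropLast_subset _ h

lemma IsWalk.exists_split (hp : G.IsWalk u p v) (hz : z ∈ G.walkVerts u p) :
    ∃ p₁ p₂, p = p₁ ++ p₂ ∧ G.IsWalk u p₁ z ∧ G.IsWalk z p₂ v := by
  induction p generalizing u with
  | nil =>
    obtain rfl : z = u := List.mem_singleton.1 hz
    exact ⟨[], [], rfl, rfl, hp⟩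
  | cons e p ih =>
    rcases List.mem_cons.1 hz with rfl | hz
    · exact ⟨[], e :: p, rfl, rfl, hp⟩
    · obtain ⟨p₁, p₂, rfl, h₁, h₂⟩ := ih hp.2 hz
      exact ⟨e :: p₁, p₂, rfl, ⟨hp.1, h₁⟩, h₂⟩

lemma IsSimplePath.split (hp : G.IsSimplePath u p v) (hz : z ∈ G.walkVerts u p) :
    ∃ p₁ p₂, G.IsSimplePath u p₁ z ∧ G.IsSimplePath z p₂ v ∧
      G.walkVerts u p₁ ⊆ G.walkVerts u p ∧ G.walkVerts z p₂ ⊆ G.walkVerts u p ∧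
      ∀ a ∈ G.walkVerts u p₁, a ∈ G.walkVerts z p₂ → a = z := by
  obtain ⟨p₁, p₂, rfl, h₁, h₂⟩ := hp.1.exists_split hz
  have hW := h₁.walkVerts_append p₂
  have hW₁ := h₁.walkVerts_eq_dropLast_append
  have hnd := hp.2
  rw [hW] at hnd
  obtain ⟨hD₁, hW₂, hdisj⟩ := List.nodup_append.1 hnd
  have hz₂ : z ∈ G.walkVerts z p₂ := G.start_mem_walkVerts z p₂
  refine ⟨p₁, p₂, ⟨h₁, ?_⟩, ⟨h₂, hW₂⟩, ?_, ?_, ?_⟩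
  · rw [hW₁]
    exact List.nodup_append.2 ⟨hD₁, List.nodup_singleton z,
      fun a ha b hb => (List.mem_singleton.1 hb) ▸ hdisj a ha z hz₂⟩
  · intro a ha
    rw [hW₁] at ha
    rw [hW]
    rcases List.mem_append.1 ha with ha | ha
    · exact List.mem_append_left _ ha
    · exact List.mem_append_right _ (List.mem_singleton.1 ha ▸ hz₂)
  · rw [hW]
    exact List.subset_append_right _ _
  · intro a ha₁ ha₂
    rw [hW₁] at ha₁
    rcases List.mem_append.1 ha₁ with ha | ha
    · exact absurd rfl (hdisj a ha a ha₂)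
    · exact List.mem_singleton.1 ha

lemma IsWalk.exists_isSimplePath (hp : G.IsWalk u p v) :
    ∃ q, G.IsSimplePath u q v ∧ G.walkVerts u q ⊆ G.walkVerts u p := by
  induction p generalizing u with
  | nil => exact ⟨[], ⟨hp, List.nodup_singleton u⟩, List.Subset.refl _⟩
  | cons e p ih =>
    obtain ⟨q, hq, hsub⟩ := ih hp.2
    by_cases hu : u ∈ G.walkVerts (G.tgt e) q
    · -- cut off the loop through `u`
      obtain ⟨-, q₂, -, hq₂, -, hsub₂, -⟩ := hq.split hu
      exact ⟨q₂, hq₂, fun a ha => List.mem_cons_of_mem _ (hsub (hsub₂ ha))⟩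
    · exact ⟨e :: q, ⟨⟨hp.1, hq.1⟩, List.nodup_cons.2 ⟨hu, hq.2⟩⟩, List.cons_subset_cons _ hsub⟩

lemma IsWalk.exists_first_mem (hp : G.IsWalk u p v) (hC : ∃ a ∈ G.walkVerts u p, a ∈ C) :
    ∃ w p₁, G.IsWalk u p₁ w ∧ w ∈ C ∧ (∀ a ∈ G.walkVerts u p₁, a ∈ C → a = w) ∧
      G.walkVerts u p₁ ⊆ G.walkVerts u p := by
  induction p generalizing u with
  | nil =>
    obtain ⟨a, ha, haC⟩ := hC
    obtain rfl : a = u := List.mem_singleton.1 ha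
    exact ⟨a, [], rfl, haC, fun b hb _ => List.mem_singleton.1 hb, List.Subset.refl _⟩
  | cons e p ih =>
    by_cases hu : u ∈ C
    · exact ⟨u, [], rfl, hu, fun b hb _ => List.mem_singleton.1 hb,
        fun b hb => List.mem_singleton.1 hb ▸ G.start_mem_walkVerts u _⟩
    · obtain ⟨a, ha, haC⟩ := hC
      have ha' : a ∈ G.walkVerts (G.tgt e) p :=
        (List.mem_cons.1 ha).resolve_left fun h => hu (h ▸ haC)
      obtain ⟨w, p₁, h₁, hwC, honly, hsub⟩ := ih hp.2 ⟨a, ha', haC⟩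
      refine ⟨w, e :: p₁, ⟨hp.1, h₁⟩, hwC, fun b hb hbC => ?_, List.cons_subset_cons _ hsub⟩
      rcases List.mem_cons.1 hb with rfl | hb
      · exact absurd hbC hu
      · exact honly b hb hbC

lemma IsWalk.exists_last_mem (hp : G.IsWalk u p v) (hC : ∃ a ∈ G.walkVerts u p, a ∈ C) :
    ∃ w p₂, G.IsWalk w p₂ v ∧ w ∈ C ∧ (∀ a ∈ G.walkVerts w p₂, a ∈ C → a = w) ∧
      G.walkVerts w p₂ ⊆ G.walkVerts u p := by
  induction p generalizing u with
  | nil =>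
    obtain ⟨a, ha, haC⟩ := hC
    obtain rfl : a = u := List.mem_singleton.1 ha
    exact ⟨a, [], hp, haC, fun b hb _ => List.mem_singleton.1 hb, List.Subset.refl _⟩
  | cons e p ih =>
    by_cases htail : ∃ a ∈ G.walkVerts (G.tgt e) p, a ∈ C
    · obtain ⟨w, p₂, h₂, hwC, honly, hsub⟩ := ih hp.2 htail
      exact ⟨w, p₂, h₂, hwC, honly, fun b hb => List.mem_cons_of_mem _ (hsub hb)⟩
    · obtain ⟨a, ha, haC⟩ := hC
      obtain rfl : a = u := (List.mem_cons.1 ha).resolve_right fun h => htail ⟨a, h, haC⟩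
      refine ⟨a, e :: p, hp, haC, fun b hb hbC => ?_, List.Subset.refl _⟩
      exact (List.mem_cons.1 hb).resolve_right fun h => htail ⟨b, h, hbC⟩

lemma IsWalk.exists_entryNode (hp : G.IsWalk s p v) (hC : ∃ a ∈ G.walkVerts s p, a ∈ C) :
    ∃ w ∈ G.walkVerts s p, G.EntryNode s C w := by
  obtain ⟨w, p₁, h₁, hwC, honly, hsub⟩ := hp.exists_first_mem hC
  obtain ⟨q, hq, hqsub⟩ := h₁.exists_isSimplePath
  exact ⟨w, hsub h₁.end_mem_walkVerts_s8, hwC, q, hq, fun a ha => honly a (hqsub ha)⟩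

lemma IsWalk.exists_exitNode_s8 (hp : G.IsWalk u p t) (hC : ∃ a ∈ G.walkVerts u p, a ∈ C) :
    ∃ w ∈ G.walkVerts u p, G.ExitNode t C w := by
  obtain ⟨w, p₂, h₂, hwC, honly, hsub⟩ := hp.exists_last_mem hC
  obtain ⟨q, hq, hqsub⟩ := h₂.exists_isSimplePath
  exact ⟨w, hsub (G.start_mem_walkVerts w p₂), hwC, q, hq, fun a ha => honly a (hqsub ha)⟩

lemma IsSimplePath.exists_entryNode_of_mem_isEntryPath (hh : G.IsSimplePath x h y) (hy : y ∈ C)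
    (hz : z ∈ G.walkVerts x h) (hzx : z ≠ x) (hq : G.IsEntryPath s C q u)
    (hzq : z ∈ G.walkVerts s q) :
    ∃ w ∈ G.walkVerts x h, w ≠ x ∧ G.EntryNode s C w := by
  obtain ⟨-, hq, hq_only⟩ := hq
  obtain ⟨q₁, q₂, ⟨hq₁, -⟩, ⟨hq₂, -⟩, hsub₁, -, hmeet_q⟩ := hq.split hzq
  obtain ⟨h₁, h₂, ⟨hh₁, -⟩, ⟨hh₂, -⟩, -, hsub₂, hmeet_h⟩ := hh.split hz
  have hy_mem : y ∈ G.walkVerts s (q₁ ++ h₂) := by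
    rw [hq₁.walkVerts_append]
    exact List.mem_append_right _ hh₂.end_mem_walkVerts_s8
  obtain ⟨w, hw, hwentry⟩ := (hq₁.append hh₂).exists_entryNode ⟨y, hy_mem, hy⟩
  rcases hq₁.mem_walkVerts_append hw with hw₁ | hw₂
  · obtain rfl : w = u := hq_only w (hsub₁ hw₁) hwentry.1
    obtain rfl : w = z := hmeet_q w hw₁ hq₂.end_mem_walkVerts_s8
    exact ⟨w, hz, hzx, hwentry⟩
  · refine ⟨w, hsub₂ hw₂, ?_, hwentry⟩
    rintro rfl
    exact hzx (hmeet_h w (G.start_mem_walkVerts w h₁) hw₂).symm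

lemma IsSimplePath.exists_exitNode_of_mem_isExitPath (hh : G.IsSimplePath x h y) (hx : x ∈ C)
    (hz : z ∈ G.walkVerts x h) (hzy : z ≠ y) (hq : G.IsExitPath t C q u)
    (hzq : z ∈ G.walkVerts u q) :
    ∃ w ∈ G.walkVerts x h, w ≠ y ∧ G.ExitNode t C w := by
  obtain ⟨-, hq, hq_only⟩ := hq
  obtain ⟨q₁, q₂, ⟨hq₁, -⟩, ⟨hq₂, -⟩, -, hsub₂, hmeet_q⟩ := hq.split hzq
  obtain ⟨h₁, h₂, ⟨hh₁, -⟩, ⟨hh₂, -⟩, hsub₁, -, hmeet_h⟩ := hh.split hz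
  obtain ⟨w, hw, hwexit⟩ := (hh₁.append hq₂).exists_exitNode_s8 ⟨x, G.start_mem_walkVerts x _, hx⟩
  rcases hh₁.mem_walkVerts_append hw with hw₁ | hw₂
  · refine ⟨w, hsub₁ hw₁, ?_, hwexit⟩
    rintro rfl
    exact hzy (hmeet_h w hw₁ hh₂.end_mem_walkVerts_s8).symm
  · obtain rfl : w = u := hq_only w (hsub₂ hw₂) hwexit.1
    obtain rfl : w = z := hmeet_q w (G.start_mem_walkVerts w q₁) hw₂
    exact ⟨w, hz, hzy, hwexit⟩

end MultiDigraph

namespace MultiDigraph.SplitData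

variable {V E : Type} [DecidableEq V] {G : MultiDigraph V E} {s t v : V} {p : List E}
  {ξ1 lastE lastX w : V}

lemma idxOf_entryNode_le (hsd : G.SplitData s t v p ξ1 lastE lastX)
    (hw : G.EntryNode s (G.cycleSet v p) w) :
    (G.cycleVerts v p).idxOf w ≤ (G.cycleVerts v p).idxOf ξ1 :=
  hsd.splitAt.2 w ξ1 hw hsd.firstExit.1

lemma idxOf_firstExit_le_lastExit (hsd : G.SplitData s t v p ξ1 lastE lastX) :
    (G.cycleVerts v p).idxOf ξ1 ≤ (G.cycleVerts v p).idxOf lastX :=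
  hsd.lastExit.2 ξ1 hsd.firstExit.1

lemma entryNode_notMem_Nreg (hsd : G.SplitData s t v p ξ1 lastE lastX)
    (hw : G.EntryNode s (G.cycleSet v p) w) : w ∉ G.Nreg v p lastX := fun hwN =>
  absurd hwN.2 (not_lt.2 ((hsd.idxOf_entryNode_le hw).trans hsd.idxOf_firstExit_le_lastExit))

lemma exitNode_notMem_Nreg (hsd : G.SplitData s t v p ξ1 lastE lastX)
    (hw : G.ExitNode t (G.cycleSet v p) w) : w ∉ G.Nreg v p lastX := fun hwN =>
  absurd hwN.2 (not_lt.2 (hsd.lastExit.2 w hw))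

lemma exitNode_notMem_Ereg (hsd : G.SplitData s t v p ξ1 lastE lastX)
    (hw : G.ExitNode t (G.cycleSet v p) w) : w ∉ G.Ereg v p ξ1 := fun hwE =>
  absurd hwE.2 (not_lt.2 (hsd.firstExit.2 w hw))

/-- If `ξ1 ≠ lastE` the exit region contains `ξ1`, which is nevertheless no entry node: entry nodes
lie weakly before `ξ1` and weakly before `lastE`, so an entry node at `ξ1` would be `lastE`. -/
lemma entryNode_notMem_Xreg (hsd : G.SplitData s t v p ξ1 lastE lastX)
    (hw : G.EntryNode s (G.cycleSet v p) w) : w ∉ G.Xreg v p ξ1 lastE lastX := by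
  rintro ⟨-, hX, -⟩
  have hw_le := hsd.idxOf_entryNode_le hw
  split_ifs at hX with hξ
  · omega
  · have hw_le_lastE := hsd.lastEntry.2 w hw
    have hlastE_le := hsd.idxOf_entryNode_le hsd.lastEntry.1
    exact hξ ((List.idxOf_inj hsd.firstExit.1.1).1 (by omega))

end MultiDigraph.SplitData

open MultiDigraph in
theorem stmt8_general {V E : Type} [DecidableEq V] (G : MultiDigraph V E)
    (s t v : V) (p : List E) (ξ1 lastE lastX : V)
    (hsd : G.SplitData s t v p ξ1 lastE lastX)
    (x y : V) (h : List E)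
    (hx : x ∈ G.Ereg v p ξ1) (hy : y ∈ G.Xreg v p ξ1 lastE lastX)
    (hh : G.NeutralHyperChord v p x y h (G.Nreg v p lastX)) :
    ∀ z ∈ G.walkVerts x h, z ≠ x → z ≠ y →
      (∀ u q, G.IsEntryPath s (G.cycleSet v p) q u → z ∉ G.walkVerts s q) ∧
      (∀ u q, G.IsExitPath t (G.cycleSet v p) q u → z ∉ G.walkVerts u q) := by
  intro z hz hzx hzy
  obtain ⟨⟨hxC, hyC, hsimple, -⟩, hneutral⟩ := hh
  refine ⟨fun u q hq hzq => ?_, fun u q hq hzq => ?_⟩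
  · obtain ⟨w, hwh, hwx, hw⟩ := hsimple.exists_entryNode_of_mem_isEntryPath hyC hz hzx hq hzq
    rcases hneutral w hwh hw.1 with rfl | rfl | hwN
    · exact hwx rfl
    · exact hsd.entryNode_notMem_Xreg hw hy
    · exact hsd.entryNode_notMem_Nreg hw hwN
  · obtain ⟨w, hwh, hwy, hw⟩ := hsimple.exists_exitNode_of_mem_isExitPath hxC hz hzy hq hzq
    rcases hneutral w hwh hw.1 with rfl | rfl | hwN
    · exact hsd.exitNode_notMem_Ereg hw hx
    · exact hwy rfl
    · exact hsd.exitNode_notMem_Nreg hw hwN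

open MultiDigraph in
/-- No internal vertex of a neutral hyper-chord from the entry region to the
exit region of a splittable simple cycle lies on any entry or exit path. -/
theorem stmt8 {V E : Type} [DecidableEq V] (G : MultiDigraph V E)
    (s t v : V) (p : List E) (ξ1 lastE lastX : V)
    (hconn : G.STConnected s t)
    (hsd : G.SplitData s t v p ξ1 lastE lastX)
    (x y : V) (h : List E)
    (hx : x ∈ G.Ereg v p ξ1) (hy : y ∈ G.Xreg v p ξ1 lastE lastX)
    (hh : G.NeutralHyperChord v p x y h (G.Nreg v p lastX)) :
    ∀ z ∈ G.walkVerts x h, z ≠ x → z ≠ y →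
      (∀ u q, G.IsEntryPath s (G.cycleSet v p) q u → z ∉ G.walkVerts s q) ∧
      (∀ u q, G.IsExitPath t (G.cycleSet v p) q u → z ∉ G.walkVerts u q) :=
  stmt8_general G s t v p ξ1 lastE lastX hsd x y h hx hy hh
end

section
/- Let C be a splittable simple cycle in an st-connected net and p a path from the entry region E to the exit region X whose only vertices in E∪X are its two extremes. Then either p contains the splitter, or p is a neutral hyper-chord from E to X. -/
/-!
Along the cycle edges the position in the vertex list `C = v₀ … vₙ₋₁` goes up by exactly one
at every step that does not start at `vₙ₋₁`. So a path from the entry region (before `ξ1`) to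
the exit region (at or after `ξ1`) made of cycle edges only must use the cycle edge entering
`ξ1`, and hence also visit `ξ1`: it touches the splitter. Otherwise it has an edge off the
cycle, so it is a hyper-chord, and each of its intermediate vertices on the cycle lies neither
in `E` nor in `X`, nor is it `ξ1` when the splitter is that vertex; hence it lies after the
last exit node, in `N`.
-/

namespace MultiDigraph

variable {V E : Type} (G : MultiDigraph V E)

theorem walkVerts_length (u : V) (q : List E) :
    (G.walkVerts u q).length = q.length + 1 := by
  induction q generalizing u with
  | nil => rfl
  | cons e q ih => simp [walkVerts, ih]

theorem cycleVerts_length (v : V) (p : List E) : (G.cycleVerts v p).length = p.length := by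
  simp [cycleVerts, walkVerts_length]

variable {G}

theorem IsWalk.src_tgt_getElem {u w : V} {q : List E} (h : G.IsWalk u q w) {i : ℕ}
    (hi : i < q.length) :
    G.src q[i] = (G.walkVerts u q)[i]'(by rw [walkVerts_length]; omega) ∧
      G.tgt q[i] = (G.walkVerts u q)[i + 1]'(by rw [walkVerts_length]; omega) := by
  induction q generalizing u i with
  | nil => simp at hi
  | cons e q ih =>
    obtain ⟨hsrc, hq⟩ := h
    cases i with
    | zero => cases q <;> exact ⟨hsrc, rfl⟩
    | succ i => simpa [walkVerts] using ih hq (i := i) (by simpa using hi)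

theorem IsWalk.tgt_mem_walkVerts {u w : V} {q : List E} (h : G.IsWalk u q w) {e : E}
    (he : e ∈ q) : G.tgt e ∈ G.walkVerts u q := by
  obtain ⟨i, hi, rfl⟩ := List.mem_iff_getElem.1 he
  rw [(h.src_tgt_getElem hi).2]
  exact List.getElem_mem _

variable [DecidableEq V]

theorem IsWalk.idxOf_tgt_cycleVerts {v w : V} {p : List E} (hp : G.IsWalk v p w)
    (hnd : (G.cycleVerts v p).Nodup) {e : E} (he : e ∈ p)
    (hlast : (G.cycleVerts v p).idxOf (G.src e) + 1 < p.length) :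
    (G.cycleVerts v p).idxOf (G.tgt e) = (G.cycleVerts v p).idxOf (G.src e) + 1 := by
  obtain ⟨i, hi, rfl⟩ := List.mem_iff_getElem.1 he
  have hlen := G.cycleVerts_length v p
  obtain ⟨hsrc, htgt⟩ := hp.src_tgt_getElem hi
  have hsrc' : G.src p[i] = (G.cycleVerts v p)[i]'(by omega) := by
    rw [hsrc]; exact (List.getElem_dropLast ..).symm
  rw [hsrc', hnd.idxOf_getElem] at hlast ⊢
  have htgt' : G.tgt p[i] = (G.cycleVerts v p)[i + 1]'(by omega) := by
    rw [htgt]; exact (List.getElem_dropLast ..).symm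
  rw [htgt', hnd.idxOf_getElem]

theorem IsWalk.exists_mem_tgt_eq_of_idxOf_lt_of_le {v w : V} {p : List E}
    (hp : G.IsWalk v p w) (hnd : (G.cycleVerts v p).Nodup) {ξ : V}
    (hξ : ξ ∈ G.cycleVerts v p) {u y : V} {q : List E} (hq : G.IsWalk u q y)
    (hqp : ∀ e ∈ q, e ∈ p) (hu : (G.cycleVerts v p).idxOf u < (G.cycleVerts v p).idxOf ξ)
    (hy : (G.cycleVerts v p).idxOf ξ ≤ (G.cycleVerts v p).idxOf y) :
    ∃ e ∈ q, G.tgt e = ξ := by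
  induction q generalizing u with
  | nil =>
    cases hq
    omega
  | cons e q ih =>
    obtain ⟨rfl, hq⟩ := hq
    have hξlen : (G.cycleVerts v p).idxOf ξ < p.length :=
      G.cycleVerts_length v p ▸ List.idxOf_lt_length_of_mem hξ
    have hstep := hp.idxOf_tgt_cycleVerts hnd (hqp e List.mem_cons_self) (by omega)
    by_cases hreach : (G.cycleVerts v p).idxOf ξ = (G.cycleVerts v p).idxOf (G.tgt e)
    · exact ⟨e, List.mem_cons_self, ((List.idxOf_inj hξ).1 hreach).symm⟩
    · obtain ⟨f, hf, hfξ⟩ := ih hq (fun f hf => hqp f (List.mem_cons_of_mem _ hf)) (by omega)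
      exact ⟨f, List.mem_cons_of_mem _ hf, hfξ⟩

theorem touchesSplitter_of_mem {p q : List E} {ξ1 lastE u w : V} (hq : G.IsWalk u q w)
    {e : E} (heq : e ∈ q) (hep : e ∈ p) (heξ : G.tgt e = ξ1) :
    G.TouchesSplitter p ξ1 lastE u q := by
  by_cases h : ξ1 = lastE
  · exact Or.inl ⟨h, heξ ▸ hq.tgt_mem_walkVerts heq⟩
  · exact Or.inr ⟨h, e, heq, hep, heξ⟩

theorem idxOf_le_of_mem_Xreg {v ξ1 lastE lastX y : V} {p : List E}
    (hy : y ∈ G.Xreg v p ξ1 lastE lastX) :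
    (G.cycleVerts v p).idxOf ξ1 ≤ (G.cycleVerts v p).idxOf y := by
  obtain ⟨-, hge, -⟩ := hy
  split at hge <;> omega

theorem mem_Nreg_of_not_mem_Ereg_of_not_mem_Xreg {v ξ1 lastE lastX z : V} {p : List E}
    (hz : z ∈ G.cycleVerts v p) (hzE : z ∉ G.Ereg v p ξ1)
    (hzX : z ∉ G.Xreg v p ξ1 lastE lastX) (hzξ : ξ1 = lastE → z ≠ ξ1) :
    z ∈ G.Nreg v p lastX := by
  refine ⟨hz, ?_⟩
  have hξz : (G.cycleVerts v p).idxOf ξ1 ≤ (G.cycleVerts v p).idxOf z :=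
    not_lt.1 fun h => hzE ⟨hz, h⟩
  by_contra! hle
  refine hzX ⟨hz, ?_, hle⟩
  split_ifs with h
  · exact lt_of_le_of_ne hξz fun heq => hzξ h ((List.idxOf_inj hz).1 heq.symm)
  · exact hξz

end MultiDigraph

open MultiDigraph in
theorem stmt15_general {V E : Type} [DecidableEq V] (G : MultiDigraph V E)
    (s t v : V) (p : List E) (ξ1 lastE lastX : V)
    (hsd : G.SplitData s t v p ξ1 lastE lastX)
    (x y : V) (q : List E)
    (hx : x ∈ G.Ereg v p ξ1) (hy : y ∈ G.Xreg v p ξ1 lastE lastX)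
    (hq : G.IsSimplePath x q y)
    (hint : ∀ z ∈ G.walkVerts x q, z ≠ x → z ≠ y →
      z ∉ G.Ereg v p ξ1 ∧ z ∉ G.Xreg v p ξ1 lastE lastX) :
    G.TouchesSplitter p ξ1 lastE x q ∨
    G.NeutralHyperChord v p x y q (G.Nreg v p lastX) := by
  obtain ⟨⟨hp, -, hnd⟩, -⟩ := hsd.splitAt
  by_cases hS : G.TouchesSplitter p ξ1 lastE x q
  · exact Or.inl hS
  refine Or.inr ⟨⟨hx.1, hy.1, hq, ?_⟩, fun z hz hzC => ?_⟩
  · by_contra! hqp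
    obtain ⟨e, heq, heξ⟩ := hp.exists_mem_tgt_eq_of_idxOf_lt_of_le hnd hsd.firstExit.1.1 hq.1
      hqp hx.2 (idxOf_le_of_mem_Xreg hy)
    exact hS (touchesSplitter_of_mem hq.1 heq (hqp e heq) heξ)
  · by_cases hzx : z = x
    · exact Or.inl hzx
    by_cases hzy : z = y
    · exact Or.inr (Or.inl hzy)
    obtain ⟨hzE, hzX⟩ := hint z hz hzx hzy
    exact Or.inr (Or.inr (mem_Nreg_of_not_mem_Ereg_of_not_mem_Xreg hzC hzE hzX
      fun h hzξ => hS (Or.inl ⟨h, hzξ ▸ hz⟩)))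

open MultiDigraph in
/-- A path from the entry region `E` to the exit region `X` of a splittable
simple cycle whose only vertices in `E ∪ X` are its extremes either touches
the splitter or is a neutral hyper-chord from `E` to `X`. -/
theorem stmt15 {V E : Type} [DecidableEq V] (G : MultiDigraph V E)
    (s t v : V) (p : List E) (ξ1 lastE lastX : V)
    (hconn : G.STConnected s t)
    (hsd : G.SplitData s t v p ξ1 lastE lastX)
    (x y : V) (q : List E)
    (hx : x ∈ G.Ereg v p ξ1) (hy : y ∈ G.Xreg v p ξ1 lastE lastX)
    (hq : G.IsSimplePath x q y)
    (hint : ∀ z ∈ G.walkVerts x q, z ≠ x → z ≠ y →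
      z ∉ G.Ereg v p ξ1 ∧ z ∉ G.Xreg v p ξ1 lastE lastX) :
    G.TouchesSplitter p ξ1 lastE x q ∨
    G.NeutralHyperChord v p x y q (G.Nreg v p lastX) :=
  stmt15_general G s t v p ξ1 lastE lastX hsd x y q hx hy hq hint
end
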